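/- For any antibalanced signed graph Σ on n vertices, the balancing dimension of the Cartesian product Σ □ K_n⁻ equals the balancing dimension of K_n⁻, where K_n⁻ is the all-negative complete graph on n vertices. -/

import Mathlib

open Finset
open scoped Classical

/-- A signed graph: a simple graph together with a ±1 sign on each edge. -/
structure SGraph (V : Type*) where
  G : SimpleGraph V
  sign : V → V → ℤ
  sign_symm : ∀ u v, sign u v = sign v u
  sign_mem : ∀ u v, G.Adj u v → sign u v = 1 ∨ sign u v = -1

variable {V V1 V2 W : Type*}

/-- `ζ` is a positive k-switching function for the signed graph `S`. -/
def IsPosSwitching [Fintype V] (S : SGraph V) (k : ℕ) (ζ : V → Fin k → ℤ) : Prop :=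
  (∀ v i, ζ v i = -1 ∨ ζ v i = 0 ∨ ζ v i = 1) ∧
  (∀ u v, S.G.Adj u v → (∑ i, ζ u i * ζ v i) ≠ 0) ∧
  (∀ u v, S.G.Adj u v → S.sign u v * Int.sign (∑ i, ζ u i * ζ v i) = 1)

def HasPosSwitching [Fintype V] (S : SGraph V) (k : ℕ) : Prop :=
  ∃ ζ : V → Fin k → ℤ, IsPosSwitching S k ζ

/-- The balancing dimension: least `k ≥ 1` admitting a positive k-switching function. -/
noncomputable def bdim [Fintype V] (S : SGraph V) : ℕ :=
  sInf {k | 1 ≤ k ∧ HasPosSwitching S k}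

/-- A signed graph is balanced iff it can be switched to all-positive by a 1-switching. -/
def SGraph.Balanced [Fintype V] (S : SGraph V) : Prop := HasPosSwitching S 1

/-- The negation of a signed graph. -/
def SGraph.neg (S : SGraph V) : SGraph V where
  G := S.G
  sign := fun u v => - S.sign u v
  sign_symm := fun u v => by (try dsimp only); rw [S.sign_symm]
  sign_mem := fun u v h => by rcases S.sign_mem u v h with h1 | h1 <;> simp [h1]

def SGraph.Antibalanced [Fintype V] (S : SGraph V) : Prop := S.neg.Balanced

/-- Switching equivalence of signed graphs. -/
def SwitchEquiv (S1 S2 : SGraph V) : Prop :=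
  S1.G = S2.G ∧ ∃ η : V → ℤ, (∀ v, η v = 1 ∨ η v = -1) ∧
    ∀ u v, S1.G.Adj u v → S2.sign u v = η u * S1.sign u v * η v

/-- The Cartesian product of signed graphs. -/
noncomputable def cartProd (S1 : SGraph V1) (S2 : SGraph V2) : SGraph (V1 × V2) where
  G := S1.G □ S2.G
  sign := fun p q => if p.2 = q.2 then S1.sign p.1 q.1 else S2.sign p.2 q.2
  sign_symm := by
    intro u v
    try dsimp only
    rcases eq_or_ne u.2 v.2 with h | h
    · rw [if_pos h, if_pos h.symm, S1.sign_symm]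
    · rw [if_neg h, if_neg (Ne.symm h), S2.sign_symm]
  sign_mem := by
    intro u v h
    try dsimp only
    rcases (SimpleGraph.boxProd_adj.mp h) with ⟨h1, h2⟩ | ⟨h1, h2⟩
    · rw [if_pos h2]; exact S1.sign_mem _ _ h1
    · rw [if_neg h1.ne]; exact S2.sign_mem _ _ h1
/-- The HG-lexicographic product of signed graphs. -/
noncomputable def lexHG (S1 : SGraph V1) (S2 : SGraph V2) : SGraph (V1 × V2) where
  G := { Adj := fun p q => S1.G.Adj p.1 q.1 ∨ (p.1 = q.1 ∧ S2.G.Adj p.2 q.2)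
         symm := Std.Symm.mk <| by
           rintro p q (h | ⟨h1, h2⟩)
           · exact Or.inl h.symm
           · exact Or.inr ⟨h1.symm, h2.symm⟩
         loopless := Std.Irrefl.mk <| by
           rintro p (h | ⟨_, h⟩)
           · exact S1.G.irrefl h
           · exact S2.G.irrefl h }
  sign := fun p q => if p.1 = q.1 then S2.sign p.2 q.2 else S1.sign p.1 q.1
  sign_symm := by
    intro u v
    try dsimp only
    rcases eq_or_ne u.1 v.1 with h | h
    · rw [if_pos h, if_pos h.symm, S2.sign_symm]
    · rw [if_neg h, if_neg (Ne.symm h), S1.sign_symm]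
  sign_mem := by
    rintro p q (h | ⟨h1, h2⟩)
    · (try dsimp only); rw [if_neg h.ne]; exact S1.sign_mem _ _ h
    · (try dsimp only); rw [if_pos h1]; exact S2.sign_mem _ _ h2

/-- The BCD-lexicographic product of signed graphs. -/
noncomputable def lexBCD (S1 : SGraph V1) (S2 : SGraph V2) : SGraph (V1 × V2) where
  G := { Adj := fun p q => S1.G.Adj p.1 q.1 ∨ (p.1 = q.1 ∧ S2.G.Adj p.2 q.2)
         symm := Std.Symm.mk <| by
           rintro p q (h | ⟨h1, h2⟩)
           · exact Or.inl h.symm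
           · exact Or.inr ⟨h1.symm, h2.symm⟩
         loopless := Std.Irrefl.mk <| by
           rintro p (h | ⟨_, h⟩)
           · exact S1.G.irrefl h
           · exact S2.G.irrefl h }
  sign := fun p q =>
    if S2.G.Adj p.2 q.2 then
      (if S1.G.Adj p.1 q.1 then S1.sign p.1 q.1 * S2.sign p.2 q.2 else S2.sign p.2 q.2)
    else S1.sign p.1 q.1
  sign_symm := by
    intro u v
    try dsimp only
    rw [S1.G.adj_comm v.1 u.1, S2.G.adj_comm v.2 u.2, S1.sign_symm v.1 u.1,
      S2.sign_symm v.2 u.2]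
  sign_mem := by
    rintro p q (h | ⟨h1, h2⟩) <;> try dsimp only
    · by_cases h2 : S2.G.Adj p.2 q.2
      · rw [if_pos h2, if_pos h]
        rcases S1.sign_mem _ _ h with e1 | e1 <;> rcases S2.sign_mem _ _ h2 with e2 | e2 <;>
          simp [e1, e2]
      · rw [if_neg h2]; exact S1.sign_mem _ _ h
    · rw [if_pos h2, if_neg (h1 ▸ S1.G.irrefl)]
      exact S2.sign_mem _ _ h2

/-- The tensor product of signed graphs. -/
def tensorProd (S1 : SGraph V1) (S2 : SGraph V2) : SGraph (V1 × V2) where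
  G := { Adj := fun p q => S1.G.Adj p.1 q.1 ∧ S2.G.Adj p.2 q.2
         symm := ⟨fun p q ⟨h1, h2⟩ => ⟨h1.symm, h2.symm⟩⟩
         loopless := ⟨fun p ⟨h1, _⟩ => S1.G.irrefl h1⟩ }
  sign := fun p q => S1.sign p.1 q.1 * S2.sign p.2 q.2
  sign_symm := by
    intro u v
    try dsimp only
    rw [S1.sign_symm, S2.sign_symm]
  sign_mem := by
    rintro p q ⟨h1, h2⟩
    try dsimp only
    rcases S1.sign_mem _ _ h1 with e1 | e1 <;> rcases S2.sign_mem _ _ h2 with e2 | e2 <;>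
      simp [e1, e2]

/-- The strong product of signed graphs. -/
noncomputable def strongProd (S1 : SGraph V1) (S2 : SGraph V2) : SGraph (V1 × V2) where
  G := { Adj := fun p q => (S1.G.Adj p.1 q.1 ∧ p.2 = q.2) ∨ (p.1 = q.1 ∧ S2.G.Adj p.2 q.2) ∨
           (S1.G.Adj p.1 q.1 ∧ S2.G.Adj p.2 q.2)
         symm := Std.Symm.mk <| by
           rintro p q (⟨h1, h2⟩ | ⟨h1, h2⟩ | ⟨h1, h2⟩)
           · exact Or.inl ⟨h1.symm, h2.symm⟩
           · exact Or.inr (Or.inl ⟨h1.symm, h2.symm⟩)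
           · exact Or.inr (Or.inr ⟨h1.symm, h2.symm⟩)
         loopless := Std.Irrefl.mk <| by
           rintro p (⟨h1, _⟩ | ⟨_, h2⟩ | ⟨h1, _⟩)
           · exact S1.G.irrefl h1
           · exact S2.G.irrefl h2
           · exact S1.G.irrefl h1 }
  sign := fun p q =>
    if p.1 = q.1 then S2.sign p.2 q.2
    else if p.2 = q.2 then S1.sign p.1 q.1
    else S1.sign p.1 q.1 * S2.sign p.2 q.2
  sign_symm := by
    intro u v
    try dsimp only
    rcases eq_or_ne u.1 v.1 with h | h
    · rw [if_pos h, if_pos h.symm, S2.sign_symm]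
    · rw [if_neg h, if_neg (Ne.symm h)]
      rcases eq_or_ne u.2 v.2 with h' | h'
      · rw [if_pos h', if_pos h'.symm, S1.sign_symm]
      · rw [if_neg h', if_neg (Ne.symm h'), S1.sign_symm, S2.sign_symm]
  sign_mem := by
    rintro p q (⟨h1, h2⟩ | ⟨h1, h2⟩ | ⟨h1, h2⟩) <;> try dsimp only
    · rw [if_neg h1.ne, if_pos h2]; exact S1.sign_mem _ _ h1
    · rw [if_pos h1]; exact S2.sign_mem _ _ h2
    · rw [if_neg h1.ne, if_neg h2.ne]
      rcases S1.sign_mem _ _ h1 with e1 | e1 <;> rcases S2.sign_mem _ _ h2 with e2 | e2 <;>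
        simp [e1, e2]
/-- The cycle on `ZMod n` (vertices `0,1,…,n-1`) with the single negative edge `{0,1}`. -/
noncomputable def Cneg (n : ℕ) : SGraph (ZMod n) where
  G := { Adj := fun i j => i ≠ j ∧ (i - j = 1 ∨ j - i = 1)
         symm := ⟨fun i j ⟨h1, h2⟩ => ⟨h1.symm, h2.symm⟩⟩
         loopless := ⟨fun i ⟨h1, _⟩ => h1 rfl⟩ }
  sign := fun i j => if (i = 0 ∧ j = 1) ∨ (i = 1 ∧ j = 0) then -1 else 1
  sign_symm := by
    intro u v
    try dsimp only
    exact if_congr (by tauto) rfl rfl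
  sign_mem := by
    intro u v _
    try dsimp only
    by_cases h : (u = 0 ∧ v = 1) ∨ (u = 1 ∧ v = 0)
    · rw [if_pos h]; exact Or.inr rfl
    · rw [if_neg h]; exact Or.inl rfl

/-- The all-negative complete signed graph on `n` vertices. -/
def Kneg (n : ℕ) : SGraph (Fin n) where
  G := ⊤
  sign := fun _ _ => -1
  sign_symm := fun _ _ => rfl
  sign_mem := fun _ _ _ => Or.inr rfl

/-- The edgeless signed graph on `k` vertices. -/
def Nk (k : ℕ) : SGraph (Fin k) where
  G := ⊥
  sign := fun _ _ => 1
  sign_symm := fun _ _ => rfl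
  sign_mem := fun _ _ h => (h.elim)

/-- The lexicographic product of simple graphs. -/
def lexProdGraph (G : SimpleGraph V1) (H : SimpleGraph V2) : SimpleGraph (V1 × V2) where
  Adj p q := G.Adj p.1 q.1 ∨ (p.1 = q.1 ∧ H.Adj p.2 q.2)
  symm := Std.Symm.mk <| by
    rintro p q (h | ⟨h1, h2⟩)
    · exact Or.inl h.symm
    · exact Or.inr ⟨h1.symm, h2.symm⟩
  loopless := Std.Irrefl.mk <| by
    rintro p (h | ⟨_, h⟩)
    · exact G.irrefl h
    · exact H.irrefl h


/-
An antibalanced `Σ` switches to the all-negative signed graph on its underlying graph, so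
`Σ □ K_n⁻` switches to a Cartesian product all of whose edges are negative. Labelling the
vertices of `Σ` injectively by `Fin n`, the map `(u, j) ↦ e u + j` sends adjacent vertices
of that product to distinct vertices of `K_n⁻` (a Latin-square colouring), so pulling back a
positive switching function of `K_n⁻` along it balances the product. Conversely, every fibre
`{v} × Fin n` is a copy of `K_n⁻` inside `Σ □ K_n⁻`.
-/

def SGraph.allNeg (G : SimpleGraph V) : SGraph V where
  G := G
  sign := fun _ _ => -1
  sign_symm := fun _ _ => rfl
  sign_mem := fun _ _ _ => Or.inr rfl

lemma hasPosSwitching_of_isEmpty [Fintype V] [IsEmpty V] (S : SGraph V) (k : ℕ) :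
    HasPosSwitching S k :=
  ⟨fun _ _ => 0, fun v => isEmptyElim v, fun v => isEmptyElim v, fun v => isEmptyElim v⟩

def SGraph.IsHom (T : SGraph W) (S : SGraph V) (f : W → V) : Prop :=
  ∀ a b, T.G.Adj a b → S.G.Adj (f a) (f b) ∧ S.sign (f a) (f b) = T.sign a b

lemma HasPosSwitching.comap [Fintype V] [Fintype W] {S : SGraph V} {T : SGraph W} {k : ℕ}
    {f : W → V} (hf : T.IsHom S f) (h : HasPosSwitching S k) : HasPosSwitching T k := by
  obtain ⟨ζ, hval, hne, hsign⟩ := h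
  refine ⟨ζ ∘ f, fun a => hval (f a), fun a b hab => hne _ _ (hf a b hab).1, fun a b hab => ?_⟩
  rw [← (hf a b hab).2]
  exact hsign _ _ (hf a b hab).1

lemma HasPosSwitching.of_switchEquiv [Fintype V] {S T : SGraph V} {k : ℕ}
    (hST : SwitchEquiv S T) (h : HasPosSwitching S k) : HasPosSwitching T k := by
  obtain ⟨hG, η, hη, hsignT⟩ := hST
  obtain ⟨ζ, hval, hne, hsign⟩ := h
  have hsq : ∀ v, η v * η v = 1 := fun v => by rcases hη v with h | h <;> rw [h] <;> rfl
  have hηsign : ∀ u v, Int.sign (η u * η v) = η u * η v := fun u v => by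
    rcases hη u with h | h <;> rcases hη v with h' | h' <;> rw [h, h'] <;> rfl
  have hinner : ∀ u v, ∑ i, η u * ζ u i * (η v * ζ v i) = η u * η v * ∑ i, ζ u i * ζ v i :=
    fun u v => by rw [Finset.mul_sum]; exact Finset.sum_congr rfl fun i _ => by ring
  refine ⟨fun v i => η v * ζ v i, fun v i => ?_, fun u v huv => ?_, fun u v huv => ?_⟩
  · rcases hη v with h | h <;> rcases hval v i with h' | h' | h' <;> simp [h, h']
  · rw [← hG] at huv
    rw [hinner]
    exact mul_ne_zero (by rcases hη u with h | h <;> rcases hη v with h' | h' <;> simp [h, h'])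
      (hne u v huv)
  · rw [← hG] at huv
    rw [hinner, Int.sign_mul, hηsign, hsignT u v huv]
    linear_combination (S.sign u v * Int.sign (∑ i, ζ u i * ζ v i)) *
      (η v * η v * hsq u + hsq v) + hsign u v huv

lemma SGraph.Antibalanced.switchEquiv_allNeg [Fintype V] {S : SGraph V} (hS : S.Antibalanced) :
    SwitchEquiv (SGraph.allNeg S.G) S := by
  obtain ⟨ζ, hval, hne, hsign⟩ := hS
  -- at an endpoint of an edge `ζ v 0 = ±1`, and there the switching function is `ζ v 0`
  refine ⟨rfl, fun v => if ζ v 0 = -1 then -1 else 1, fun v => by dsimp only; split_ifs <;> simp,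
    fun u v huv => ?_⟩
  have hne' := hne u v huv
  have hsign' := hsign u v huv
  simp only [Fin.sum_univ_one] at hne' hsign'
  change -S.sign u v * _ = 1 at hsign'
  change S.sign u v = _ * -1 * _
  rcases hval u 0 with hu | hu | hu <;> rcases hval v 0 with hv | hv | hv <;>
    rcases S.sign_mem u v huv with hs | hs <;> simp_all

lemma SwitchEquiv.cartProd_left {S₁ S₁' : SGraph V1} (S₂ : SGraph V2) (h : SwitchEquiv S₁ S₁') :
    SwitchEquiv (cartProd S₁ S₂) (cartProd S₁' S₂) := by
  obtain ⟨hG, η, hη, hsign⟩ := h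
  refine ⟨congrArg (· □ S₂.G) hG, fun p => η p.1, fun p => hη p.1, fun p q hpq => ?_⟩
  rcases SimpleGraph.boxProd_adj.mp hpq with ⟨h₁, h₂⟩ | ⟨h₁, h₂⟩
  · simp only [cartProd, if_pos h₂, hsign _ _ h₁]
  · simp only [cartProd, if_neg h₁.ne, ← h₂]
    rcases hη p.1 with h | h <;> rw [h] <;> ring

lemma SGraph.isHom_prodMk_left (S₁ : SGraph V1) (S₂ : SGraph V2) (v : V1) :
    S₂.IsHom (cartProd S₁ S₂) (Prod.mk v) := fun _ _ hab =>
  ⟨SimpleGraph.boxProd_adj.mpr (Or.inr ⟨hab, rfl⟩), if_neg hab.ne⟩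

lemma SGraph.isHom_cartProd_allNeg_Kneg {n : ℕ} (G : SimpleGraph V) {e : V → Fin n}
    (he : e.Injective) :
    (cartProd (SGraph.allNeg G) (Kneg n)).IsHom (Kneg n) (fun p => e p.1 + p.2) := by
  refine fun p q hpq => ⟨?_, by simp only [cartProd]; split_ifs <;> rfl⟩
  change e p.1 + p.2 ≠ e q.1 + q.2
  rcases SimpleGraph.boxProd_adj.mp hpq with ⟨h₁, h₂⟩ | ⟨h₁, h₂⟩
  · rw [h₂, Ne, add_left_inj, he.eq_iff]
    exact h₁.ne
  · rw [h₂, Ne, add_right_inj]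
    exact h₁.ne

lemma bdim_congr [Fintype V] [Fintype W] {S : SGraph V} {T : SGraph W}
    (h : ∀ k, HasPosSwitching S k ↔ HasPosSwitching T k) : bdim S = bdim T := by
  simp only [bdim, h]

theorem stmt6 (n : ℕ) [Fintype V] (S : SGraph V) (hcard : Fintype.card V = n)
    (hS : S.Antibalanced) :
    bdim (cartProd S (Kneg n)) = bdim (Kneg n) := by
  refine bdim_congr fun k => ⟨fun h => ?_, fun h => ?_⟩
  · rcases isEmpty_or_nonempty V with _ | ⟨⟨v⟩⟩
    · subst hcard
      rw [Fintype.card_eq_zero]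
      exact hasPosSwitching_of_isEmpty _ k
    · exact h.comap (SGraph.isHom_prodMk_left S _ v)
  · have e := Fintype.equivFinOfCardEq hcard
    exact (h.comap (SGraph.isHom_cartProd_allNeg_Kneg S.G e.injective)).of_switchEquiv
      (hS.switchEquiv_allNeg.cartProd_left _)
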